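/- The complex I_n^↑(pos) of ascending symmetric ideal edges is not (n-2)-acyclic; i.e., its reduced homology in degree n-2 is nonzero. -/

import Mathlib

/-- `A` splits the pair `{i, ī}`. -/
def Splits {n : ℕ} (A : Finset (Fin n × Bool)) (i : Fin n) : Prop :=
  Xor' ((i, false) ∈ A) ((i, true) ∈ A)

/-- Symmetric ideal edge: `|A| ≥ 2`, `E \ A ≠ ∅`, exactly one pair is split. -/
def IsSIE {n : ℕ} (A : Finset (Fin n × Bool)) : Prop :=
  2 ≤ A.card ∧ A ≠ Finset.univ ∧ ∃! i : Fin n, Splits A i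

/-- Ascending for the positive character: contains the unbarred element of its split pair. -/
def IsAscSIE {n : ℕ} (A : Finset (Fin n × Bool)) : Prop :=
  IsSIE A ∧ ∀ i : Fin n, Splits A i → (i, false) ∈ A

/-- Compatibility of ideal edges. -/
def Compat {n : ℕ} (A B : Finset (Fin n × Bool)) : Prop :=
  A ⊆ B ∨ B ⊆ A ∨ Disjoint A B

/-- Ordered `d`-tuples of vertices of `I_n^↑(pos)` spanning a simplex (repetitions
allowed); these are the degree-`d` generators of the augmented ordered chain complex of
the simplicial complex, where a tuple of length `d` corresponds to a `(d-1)`-simplex and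
the empty tuple (in degree `0`) provides the augmentation. -/
def SimpTup (n d : ℕ) : Type :=
  {f : Fin d → Finset (Fin n × Bool) //
    (∀ i, IsAscSIE (f i)) ∧ ∀ i j, Compat (f i) (f j)}

/-- Augmented ordered simplicial chains of `I_n^↑(pos)`. -/
abbrev Chains (n d : ℕ) : Type := FreeAbelianGroup (SimpTup n d)

/-- The simplicial boundary map (the degree `1 → 0` part is the augmentation, so this
augmented complex computes reduced homology). -/
noncomputable def bd (n d : ℕ) : Chains n (d + 1) →+ Chains n d :=
  FreeAbelianGroup.lift fun f =>
    ∑ i : Fin (d + 1), ((-1 : ℤ) ^ (i : ℕ)) •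
      FreeAbelianGroup.of
        (⟨f.1 ∘ Fin.succAbove i, fun j => f.2.1 _, fun j k => f.2.2 _ _⟩ : SimpTup n d)

/-!
Send every vertex to the index of the pair it splits. In a simplex, a vertex of minimal size
contains a whole pair `{j, j̄}`, so it strictly contains any vertex splitting `j`; hence no
simplex uses all `n` indices, and the map lands in the boundary `∂Δ^{n-1}` of the simplex on the
indices. Pulling back the fundamental cocycle of this sphere, the alternating determinant of the
indices, gives a cocycle `splitCocycle`. Conversely, the barycentric subdivision of `∂Δ^{n-1}`
maps into the complex by `K ↦ ascEdge (K.max') Kᶜ`, giving a cycle on which the cocycle is `1`;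
so this cycle is not a boundary.
-/

open Finset

variable {n : ℕ}

theorem splits_iff {A : Finset (Fin n × Bool)} {i : Fin n} :
    Splits A i ↔ (i, false) ∈ A ∧ (i, true) ∉ A ∨ (i, true) ∈ A ∧ (i, false) ∉ A :=
  Iff.rfl

theorem IsAscSIE.mem_false_of_mem_true {A : Finset (Fin n × Bool)} (hA : IsAscSIE A) {j : Fin n}
    (hj : (j, true) ∈ A) : (j, false) ∈ A := by
  by_contra h
  exact h (hA.2 j (Or.inr ⟨hj, h⟩))

theorem IsAscSIE.exists_mem_true {A : Finset (Fin n × Bool)} (hA : IsAscSIE A) :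
    ∃ j, (j, true) ∈ A := by
  obtain ⟨i, hi, huniq⟩ := hA.1.2.2
  obtain ⟨⟨j, b⟩, hjA, hne⟩ := exists_mem_ne hA.1.1 (i, false)
  cases b
  · have hji : j ≠ i := fun h => hne (by rw [h])
    by_contra! hnot
    exact hji (huniq j (Or.inl ⟨hjA, hnot j⟩))
  · exact ⟨j, hjA⟩

theorem IsAscSIE.ssubset_of_compat {A B : Finset (Fin n × Bool)} (hA : IsAscSIE A)
    (hB : IsAscSIE B) {j : Fin n} (hBj : Splits B j) (hAj : (j, true) ∈ A) (hAB : Compat A B) :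
    B ⊂ A := by
  have hjB : (j, false) ∈ B := hB.2 j hBj
  have hjB' : (j, true) ∉ B := fun h => hBj.elim (fun h' => h'.2 h) (fun h' => h'.2 hjB)
  rcases hAB with hAB | hBA | hdisj
  · exact absurd (hAB hAj) hjB'
  · exact (ssubset_iff_of_subset hBA).2 ⟨_, hAj, hjB'⟩
  · exact absurd hjB (disjoint_left.1 hdisj (hA.mem_false_of_mem_true hAj))

namespace SimpTup

variable {d : ℕ}

noncomputable def splitIdx (g : SimpTup n d) (t : Fin d) : Fin n :=
  (g.2.1 t).1.2.2.exists.choose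

theorem splits_splitIdx (g : SimpTup n d) (t : Fin d) : Splits (g.1 t) (g.splitIdx t) :=
  (g.2.1 t).1.2.2.exists.choose_spec

theorem splitIdx_eq (g : SimpTup n d) {t : Fin d} {i : Fin n} (h : Splits (g.1 t) i) :
    g.splitIdx t = i :=
  (g.2.1 t).1.2.2.unique (g.splits_splitIdx t) h

/-- A vertex of minimal size would strictly contain another one. -/
theorem splitIdx_not_surjective [NeZero n] (g : SimpTup n d) :
    ¬ Function.Surjective g.splitIdx := by
  intro hsurj
  have : Nonempty (Fin d) := ⟨(hsurj 0).choose⟩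
  obtain ⟨r, -, hmin⟩ := exists_min_image univ (fun t => (g.1 t).card) univ_nonempty
  obtain ⟨j, hj⟩ := (g.2.1 r).exists_mem_true
  obtain ⟨r', hr'⟩ := hsurj j
  have hlt : g.1 r' ⊂ g.1 r := (g.2.1 r).ssubset_of_compat (g.2.1 r')
    (hr' ▸ g.splits_splitIdx r') hj (g.2.2 r r')
  exact (card_lt_card hlt).not_ge (hmin r' (mem_univ _))

def face (g : SimpTup n (d + 1)) (i : Fin (d + 1)) : SimpTup n d :=
  ⟨g.1 ∘ i.succAbove, fun _ => g.2.1 _, fun _ _ => g.2.2 _ _⟩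

theorem splitIdx_face (g : SimpTup n (d + 1)) (i : Fin (d + 1)) :
    (g.face i).splitIdx = g.splitIdx ∘ i.succAbove :=
  rfl

end SimpTup

theorem bd_of {d : ℕ} (g : SimpTup n (d + 1)) :
    bd n d (FreeAbelianGroup.of g) =
      ∑ i : Fin (d + 1), ((-1 : ℤ) ^ (i : ℕ)) • FreeAbelianGroup.of (g.face i) :=
  FreeAbelianGroup.lift_apply_of _ _

/-- `altDet u` is the sign of `u` when `u` is a permutation and `0` otherwise. -/
def altDet {m : ℕ} (u : Fin m → Fin m) : ℤ :=
  ((1 : Matrix (Fin m) (Fin m) ℤ).submatrix u id).det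

theorem altDet_id {m : ℕ} : altDet (id : Fin m → Fin m) = 1 := by
  rw [altDet, Matrix.submatrix_id_id, Matrix.det_one]

theorem altDet_eq_zero_of_not_injective {m : ℕ} {u : Fin m → Fin m}
    (hu : ¬ Function.Injective u) : altDet u = 0 := by
  obtain ⟨a, b, hab, hne⟩ : ∃ a b, u a = u b ∧ a ≠ b := by
    simpa [Function.Injective] using hu
  exact Matrix.det_zero_of_row_eq hne (by ext c; simp only [Matrix.submatrix_apply]; rw [hab])

theorem Fin.snoc_comp_castSucc_succAbove {m : ℕ} {α : Type*} (h : Fin (m + 1) → α) (x : α)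
    (i : Fin (m + 1)) :
    (Fin.snoc h x : Fin (m + 2) → α) ∘ i.castSucc.succAbove =
      Fin.snoc (h ∘ i.succAbove) x := by
  funext y
  refine Fin.lastCases ?_ (fun s => ?_) y
  · simp [Fin.succAbove_ne_last_last (Fin.castSucc_lt_last i).ne]
  · simp

/-- Laplace expansion, along the first column, of the singular matrix obtained by bordering the
rows `e_{h 0}, …, e_{h m}, e_x` with a column of ones. -/
theorem sum_altDet_snoc_comp_succAbove {m : ℕ} (h : Fin (m + 1) → Fin (m + 1))
    (x : Fin (m + 1)) :
    ∑ i : Fin (m + 1), (-1 : ℤ) ^ (i : ℕ) * altDet (Fin.snoc (h ∘ i.succAbove) x) =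
      (-1) ^ m * altDet h := by
  set H : Fin (m + 2) → Fin (m + 1) := Fin.snoc h x
  set B : Matrix (Fin (m + 2)) (Fin (m + 2)) ℤ :=
    Matrix.of fun r => Fin.cons 1 ((1 : Matrix (Fin (m + 1)) (Fin (m + 1)) ℤ) (H r))
  have hB : B.det = 0 := by
    refine Matrix.exists_mulVec_eq_zero_iff.1
      ⟨Fin.cons (-1) 1, fun h0 => ?_, funext fun r => ?_⟩
    · simpa using congrFun h0 0
    · simp [B, Matrix.mulVec, dotProduct, Fin.sum_univ_succ, Matrix.one_apply]
  have hminor (r : Fin (m + 2)) :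
      (B.submatrix r.succAbove Fin.succ).det = altDet (H ∘ r.succAbove) := by
    rw [altDet]; congr 1
  rw [Matrix.det_succ_column_zero, Fin.sum_univ_castSucc] at hB
  simp only [B, Matrix.of_apply, Fin.cons_zero, mul_one, hminor, Fin.val_castSucc,
    Fin.val_last, H, Fin.snoc_comp_castSucc_succAbove] at hB
  rw [Fin.succAbove_last, Fin.snoc_comp_castSucc] at hB
  linear_combination hB

noncomputable def splitCocycle (d : ℕ) : Chains (d + 2) (d + 1) →+ ℤ :=
  FreeAbelianGroup.lift fun g => altDet (Fin.snoc g.splitIdx (Fin.last (d + 1)))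

theorem splitCocycle_bd (d : ℕ) (x : Chains (d + 2) (d + 2)) :
    splitCocycle d (bd (d + 2) (d + 1) x) = 0 := by
  suffices (splitCocycle d).comp (bd (d + 2) (d + 1)) = 0 from DFunLike.congr_fun this x
  refine FreeAbelianGroup.lift_ext _ _ fun w => ?_
  have hw : ¬ Function.Injective w.splitIdx := fun h =>
    w.splitIdx_not_surjective (Finite.surjective_of_injective h)
  simp only [AddMonoidHom.comp_apply, bd_of, map_sum, map_zsmul, splitCocycle,
    FreeAbelianGroup.lift_apply_of, SimpTup.splitIdx_face, smul_eq_mul, AddMonoidHom.zero_apply]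
  rw [sum_altDet_snoc_comp_succAbove, altDet_eq_zero_of_not_injective hw, mul_zero]

def ascEdge (i : Fin n) (S : Finset (Fin n)) : Finset (Fin n × Bool) :=
  insert (i, false) (S ×ˢ univ)

section ascEdge

variable {i j : Fin n} {S T : Finset (Fin n)}

theorem mem_ascEdge {p : Fin n × Bool} : p ∈ ascEdge i S ↔ p = (i, false) ∨ p.1 ∈ S := by
  simp [ascEdge]

theorem splits_ascEdge_iff (hi : i ∉ S) : Splits (ascEdge i S) j ↔ j = i := by
  by_cases hj : j = i
  · subst hj
    simp [splits_iff, mem_ascEdge, hi]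
  · by_cases hjS : j ∈ S <;> simp [splits_iff, mem_ascEdge, hj, hjS]

theorem isAscSIE_ascEdge (hi : i ∉ S) (hS : S.Nonempty) : IsAscSIE (ascEdge i S) := by
  obtain ⟨s, hs⟩ := hS
  refine ⟨⟨?_, ?_, i, (splits_ascEdge_iff hi).2 rfl, fun _ => (splits_ascEdge_iff hi).1⟩, ?_⟩
  · refine one_lt_card.2 ⟨(i, false), mem_ascEdge.2 (Or.inl rfl), (s, false),
      mem_ascEdge.2 (Or.inr hs), ?_⟩
    simpa using fun h : i = s => hi (h ▸ hs)
  · intro h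
    have : (i, true) ∈ ascEdge i S := h ▸ mem_univ _
    simp [mem_ascEdge, hi] at this
  · intro j hj
    rw [(splits_ascEdge_iff hi).1 hj]
    exact mem_ascEdge.2 (Or.inl rfl)

theorem ascEdge_subset_ascEdge (hTS : T ⊆ S) (hj : j = i ∨ j ∈ S) :
    ascEdge j T ⊆ ascEdge i S := by
  intro p hp
  rcases mem_ascEdge.1 hp with rfl | hp
  · rcases hj with rfl | hj
    · exact mem_ascEdge.2 (Or.inl rfl)
    · exact mem_ascEdge.2 (Or.inr hj)
  · exact mem_ascEdge.2 (Or.inr (hTS hp))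

end ascEdge

theorem Equiv.Perm.eq_one_of_forall_le_apply {m : ℕ} {σ : Equiv.Perm (Fin m)}
    (h : ∀ x, x ≤ σ x) : σ = 1 := by
  have hsum : ∑ x : Fin m, (x : ℕ) = ∑ x, (σ x : ℕ) :=
    (Equiv.sum_comp σ (fun x => (x : ℕ))).symm
  have heq := (sum_eq_sum_iff_of_le fun x _ => Fin.le_def.1 (h x)).1 hsum
  exact Equiv.ext fun x => (Fin.ext (heq x (mem_univ x))).symm

theorem Fin.swap_castSucc_succ_le_castSucc_iff {m : ℕ} {i s : Fin (m + 1)} (hs : s ≠ i)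
    (y : Fin (m + 2)) : Equiv.swap i.castSucc i.succ y ≤ s.castSucc ↔ y ≤ s.castSucc := by
  have hs' : (s : ℕ) ≠ i := Fin.val_ne_of_ne hs
  rcases eq_or_ne y i.castSucc with rfl | h1
  · simp only [Equiv.swap_apply_left, Fin.le_def, Fin.val_succ, Fin.val_castSucc]
    omega
  rcases eq_or_ne y i.succ with rfl | h2
  · simp only [Equiv.swap_apply_right, Fin.le_def, Fin.val_succ, Fin.val_castSucc]
    omega
  rw [Equiv.swap_apply_of_ne_of_ne h1 h2]

namespace SphereCycle

open Equiv

variable {d : ℕ}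

def sublevel (σ : Perm (Fin (d + 2))) (t : Fin (d + 1)) : Finset (Fin (d + 2)) :=
  {x | σ x ≤ t.castSucc}

theorem mem_sublevel {σ : Perm (Fin (d + 2))} {t : Fin (d + 1)} {x : Fin (d + 2)} :
    x ∈ sublevel σ t ↔ σ x ≤ t.castSucc := by
  simp [sublevel]

theorem sublevel_nonempty (σ : Perm (Fin (d + 2))) (t : Fin (d + 1)) :
    (sublevel σ t).Nonempty :=
  ⟨σ.symm t.castSucc, mem_sublevel.2 (by simp)⟩

theorem compl_sublevel_nonempty (σ : Perm (Fin (d + 2))) (t : Fin (d + 1)) :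
    (sublevel σ t)ᶜ.Nonempty :=
  ⟨σ.symm (Fin.last _), by simp [mem_sublevel]⟩

theorem sublevel_mono (σ : Perm (Fin (d + 2))) : Monotone (sublevel σ) :=
  fun _ _ hst _ hx =>
    mem_sublevel.2 ((mem_sublevel.1 hx).trans (Fin.castSucc_le_castSucc_iff.2 hst))

theorem sublevel_swap_mul (σ : Perm (Fin (d + 2))) {i s : Fin (d + 1)} (hs : s ≠ i) :
    sublevel (swap i.castSucc i.succ * σ) s = sublevel σ s := by
  ext x
  simp only [mem_sublevel, Perm.mul_apply, Fin.swap_castSucc_succ_le_castSucc_iff hs]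

noncomputable def sublevelMax (σ : Perm (Fin (d + 2))) (t : Fin (d + 1)) : Fin (d + 2) :=
  (sublevel σ t).max' (sublevel_nonempty σ t)

theorem sublevelMax_mem (σ : Perm (Fin (d + 2))) (t : Fin (d + 1)) :
    sublevelMax σ t ∈ sublevel σ t :=
  max'_mem _ _

theorem sublevelMax_mono (σ : Perm (Fin (d + 2))) : Monotone (sublevelMax σ) :=
  fun _ _ hst => max'_subset _ (sublevel_mono σ hst)

theorem sublevelMax_one (t : Fin (d + 1)) : sublevelMax 1 t = t.castSucc :=
  le_antisymm (max'_le _ _ _ fun _ hx => mem_sublevel.1 hx)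
    (le_max' _ _ (mem_sublevel.2 le_rfl))

theorem eq_one_of_injective_snoc_sublevelMax (σ : Perm (Fin (d + 2)))
    (h : Function.Injective (Fin.snoc (sublevelMax σ) (Fin.last (d + 1)) : Fin (d + 2) → _)) :
    σ = 1 := by
  have hne (t : Fin (d + 1)) : sublevelMax σ t ≠ Fin.last _ := fun he =>
    (Fin.castSucc_lt_last t).ne (h (by simpa using he))
  have hinj : Function.Injective (sublevelMax σ) := fun s t hst =>
    Fin.castSucc_injective _ (h (by simpa using hst))
  have hmono : StrictMono fun t => (sublevelMax σ t).castPred (hne t) := fun s t hst => by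
    simpa using (sublevelMax_mono σ).strictMono_of_injective hinj hst
  have hmax (t : Fin (d + 1)) : sublevelMax σ t = t.castSucc := by
    simpa using congrArg Fin.castSucc (hmono.apply_eq (x := t))
  refine Perm.eq_one_of_forall_le_apply fun x => ?_
  by_cases hx : σ x = Fin.last _
  · exact hx ▸ Fin.le_last x
  · have hmem : x ∈ sublevel σ ((σ x).castPred hx) := mem_sublevel.2 (by simp)
    simpa using (le_max' _ _ hmem).trans_eq (hmax _)

noncomputable def flagEdge (σ : Perm (Fin (d + 2))) (t : Fin (d + 1)) :
    Finset (Fin (d + 2) × Bool) :=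
  ascEdge (sublevelMax σ t) (sublevel σ t)ᶜ

theorem sublevelMax_notMem_compl (σ : Perm (Fin (d + 2))) (t : Fin (d + 1)) :
    sublevelMax σ t ∉ (sublevel σ t)ᶜ :=
  notMem_compl.2 (sublevelMax_mem σ t)

theorem isAscSIE_flagEdge (σ : Perm (Fin (d + 2))) (t : Fin (d + 1)) :
    IsAscSIE (flagEdge σ t) :=
  isAscSIE_ascEdge (sublevelMax_notMem_compl σ t) (compl_sublevel_nonempty σ t)

theorem flagEdge_antitone (σ : Perm (Fin (d + 2))) : Antitone (flagEdge σ) := by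
  intro s t hst
  refine ascEdge_subset_ascEdge (compl_subset_compl.2 (sublevel_mono σ hst)) ?_
  by_cases hmem : sublevelMax σ t ∈ sublevel σ s
  · exact Or.inl (le_antisymm (le_max' _ _ hmem) (sublevelMax_mono σ hst))
  · exact Or.inr (mem_compl.2 hmem)

noncomputable def flagSimplex (σ : Perm (Fin (d + 2))) : SimpTup (d + 2) (d + 1) :=
  ⟨flagEdge σ, isAscSIE_flagEdge σ, fun s t => by
    rcases le_total s t with hst | hts
    · exact Or.inr (Or.inl (flagEdge_antitone σ hst))
    · exact Or.inl (flagEdge_antitone σ hts)⟩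

theorem splitIdx_flagSimplex (σ : Perm (Fin (d + 2))) :
    (flagSimplex σ).splitIdx = sublevelMax σ :=
  funext fun t => (flagSimplex σ).splitIdx_eq
    ((splits_ascEdge_iff (sublevelMax_notMem_compl σ t)).2 rfl)

/-- `swap i (i + 1) * σ` only changes the `i`-th set of the flag, which the `i`-th face omits. -/
theorem face_flagSimplex_swap_mul (σ : Perm (Fin (d + 2))) (i : Fin (d + 1)) :
    (flagSimplex (swap i.castSucc i.succ * σ)).face i = (flagSimplex σ).face i := by
  refine Subtype.ext (funext fun t => ?_)
  have h := sublevel_swap_mul σ (Fin.succAbove_ne i t)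
  simp only [SimpTup.face, flagSimplex, Function.comp_apply, flagEdge, sublevelMax, h]

end SphereCycle

noncomputable def sphereCycle (d : ℕ) : Chains (d + 2) (d + 1) :=
  ∑ σ : Equiv.Perm (Fin (d + 2)), σ.sign • FreeAbelianGroup.of (SphereCycle.flagSimplex σ)

theorem bd_sphereCycle (d : ℕ) : bd (d + 2) d (sphereCycle d) = 0 := by
  simp only [sphereCycle, map_sum, map_zsmul_unit, bd_of, smul_sum]
  rw [sum_comm]
  refine sum_eq_zero fun i _ => ?_
  have hi : i.castSucc ≠ i.succ := Fin.castSucc_lt_succ.ne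
  have hswap : Equiv.swap i.castSucc i.succ ≠ 1 := mt Equiv.swap_eq_one_iff.1 hi
  refine sum_ninvolution (Equiv.swap i.castSucc i.succ * ·) (fun σ => ?_)
    (fun σ _ => by simpa using hswap) (fun _ => mem_univ _)
    (fun σ => Equiv.swap_mul_self_mul _ _ σ)
  rw [SphereCycle.face_flagSimplex_swap_mul, Equiv.Perm.sign_mul, Equiv.Perm.sign_swap hi]
  simp

theorem splitCocycle_sphereCycle (d : ℕ) : splitCocycle d (sphereCycle d) = 1 := by
  simp only [sphereCycle, map_sum, map_zsmul_unit, splitCocycle, FreeAbelianGroup.lift_apply_of,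
    SphereCycle.splitIdx_flagSimplex]
  rw [sum_eq_single_of_mem 1 (mem_univ _) fun σ _ hσ => ?_]
  · have hid :
        (Fin.snoc (SphereCycle.sublevelMax 1) (Fin.last (d + 1)) : Fin (d + 2) → _) = id :=
      funext fun x => Fin.lastCases (by simp) (fun t => by simp [SphereCycle.sublevelMax_one]) x
    simp [hid, altDet_id]
  · rw [altDet_eq_zero_of_not_injective
      (mt (SphereCycle.eq_one_of_injective_snoc_sublevelMax σ) hσ), smul_zero]

/-- The complex `I_n^↑(pos)` of ascending symmetric ideal edges is not `(n-2)`-acyclic: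
its reduced homology in degree `n - 2` is nonzero, i.e. there is a cycle of degree `n - 2`
(a chain on tuples of length `n - 2 + 1`) which is not a boundary. -/
theorem stmt11 (n : ℕ) (hn : 2 ≤ n) :
    ∃ z : Chains n (n - 2 + 1),
      bd n (n - 2) z = 0 ∧ z ∉ Set.range (bd n (n - 2 + 1)) := by
  obtain ⟨d, rfl⟩ : ∃ d, n = d + 2 := ⟨n - 2, by omega⟩
  refine ⟨sphereCycle d, bd_sphereCycle d, ?_⟩
  rintro ⟨w, hw⟩
  have h : splitCocycle d (sphereCycle d) = 0 := hw ▸ splitCocycle_bd d w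
  exact one_ne_zero (splitCocycle_sphereCycle d ▸ h)
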